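/- arXiv:0811.3187 — 2 statements merged into one kernel-verified Lean document; each statement's English description precedes it below -/
import Mathlib

section
/- Let H be a separable Hilbert space with orthonormal basis (e_n)_{n∈ℕ}, let 0 < q < 1 and let L_q be the bounded operator defined by L_q e_n = q^n e_n. Let v = (√6/π)·∑_{n∈ℕ} (n+1)^{-1} e_n and T = |e_0⟩⟨v| (the rank-one operator T x = ⟨v, x⟩ e_0). Then ‖v‖ = 1, L_q T = T, and the sequence n ↦ n·⟨e_0, T e_n⟩ does not tend to 0, i.e. T is not a rapid decay matrix. -/
open scoped RealInnerProductSpace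

/-! By Parseval and Euler's `∑ 1/(n+1)² = π²/6`, the coefficients `1/(n+1)` have `ℓ²` norm
`π/√6`, so `v` is a unit vector with `⟪v, e n⟫ = (√6/π)/(n+1)`. Hence `n ⟪e 0, T e n⟫` tends to
`√6/π ≠ 0`, while `L` fixes the range of `T`, which is spanned by `e 0 = q⁰ • e 0`. -/

open Real Filter Topology

theorem hasSum_inv_succ_sq : HasSum (fun n : ℕ => ((n : ℝ) + 1)⁻¹ ^ 2) (π ^ 2 / 6) := by
  have h := (hasSum_nat_add_iff (f := fun n : ℕ => 1 / (n : ℝ) ^ 2) 1).mpr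
    (by simpa using hasSum_zeta_two)
  simpa [inv_pow] using h

theorem memℓp_two_of_summable_norm_sq {ι : Type*} {E : ι → Type*}
    [∀ i, NormedAddCommGroup (E i)] {a : ∀ i, E i} (ha : Summable fun i => ‖a i‖ ^ 2) :
    Memℓp a 2 :=
  memℓp_gen (by simpa using ha)

theorem lp.norm_two_sq_eq_tsum {ι : Type*} {E : ι → Type*} [∀ i, NormedAddCommGroup (E i)]
    (f : lp E 2) : ‖f‖ ^ 2 = ∑' i, ‖f i‖ ^ 2 := by
  simpa using lp.norm_rpow_eq_tsum (p := 2) (by simp) f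

namespace HilbertBasis

variable {ι 𝕜 E : Type*} [RCLike 𝕜] [NormedAddCommGroup E] [InnerProductSpace 𝕜 E]
  (e : HilbertBasis ι 𝕜 E) {a : ι → 𝕜}

theorem tsum_smul_eq_repr_symm (ha : Memℓp a 2) : ∑' i, a i • e i = e.repr.symm ⟨a, ha⟩ :=
  (e.hasSum_repr_symm ⟨a, ha⟩).tsum_eq

theorem inner_tsum_smul (ha : Memℓp a 2) (i : ι) :
    inner 𝕜 (e i) (∑' j, a j • e j) = a i := by
  rw [← e.repr_apply_apply, e.tsum_smul_eq_repr_symm ha, e.repr.apply_symm_apply]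

theorem norm_tsum_smul_sq (ha : Memℓp a 2) :
    ‖∑' i, a i • e i‖ ^ 2 = ∑' i, ‖a i‖ ^ 2 := by
  rw [e.tsum_smul_eq_repr_symm ha, e.repr.symm.norm_map, lp.norm_two_sq_eq_tsum]

end HilbertBasis

theorem rank_one_not_rapid_decay_general (H : Type*) [NormedAddCommGroup H] [InnerProductSpace ℝ H]
    (e : HilbertBasis ℕ ℝ H) (q : ℝ)
    (L T : H →L[ℝ] H)
    (hL : ∀ n : ℕ, L (e n) = q ^ n • e n)
    (v : H) (hv : v = (Real.sqrt 6 / Real.pi) • ∑' n : ℕ, ((n : ℝ) + 1)⁻¹ • e n)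
    (hT : ∀ x : H, T x = ⟪v, x⟫ • e 0) :
    ‖v‖ = 1 ∧ (∀ x : H, L (T x) = T x) ∧
      ¬ Filter.Tendsto (fun n : ℕ => (n : ℝ) * ⟪e 0, T (e n)⟫) Filter.atTop (nhds 0) := by
  set c := √6 / π
  have hc : 0 < c := by positivity
  have hmem : Memℓp (fun n : ℕ => ((n : ℝ) + 1)⁻¹) 2 :=
    memℓp_two_of_summable_norm_sq (by simpa using hasSum_inv_succ_sq.summable)
  have hv_sq : ‖v‖ ^ 2 = 1 := by
    rw [hv, norm_smul, mul_pow, e.norm_tsum_smul_sq hmem]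
    simp only [Real.norm_eq_abs, sq_abs, hasSum_inv_succ_sq.tsum_eq, c, div_pow]
    rw [Real.sq_sqrt (by norm_num)]
    field_simp
  have hv_inner (n : ℕ) : ⟪v, e n⟫ = c * ((n : ℝ) + 1)⁻¹ := by
    rw [real_inner_comm, hv, inner_smul_right, e.inner_tsum_smul hmem]
  have h_entry (n : ℕ) : (n : ℝ) * ⟪e 0, T (e n)⟫ = c * ((n : ℝ) / (n + 1)) := by
    rw [hT, real_inner_smul_right, hv_inner, real_inner_self_eq_norm_sq, e.orthonormal.1 0]
    ring
  have h_lim : Tendsto (fun n : ℕ => (n : ℝ) * ⟪e 0, T (e n)⟫) atTop (𝓝 c) := by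
    simpa [h_entry] using (tendsto_natCast_div_add_atTop (1 : ℝ)).const_mul c
  refine ⟨by nlinarith [norm_nonneg v], fun x => ?_,
    fun h0 => hc.ne' (tendsto_nhds_unique h_lim h0)⟩
  rw [hT, map_smul, hL 0, pow_zero, one_smul]

theorem rank_one_not_rapid_decay (H : Type*) [NormedAddCommGroup H] [InnerProductSpace ℝ H]
    (e : HilbertBasis ℕ ℝ H) (q : ℝ) (hq0 : 0 < q) (hq1 : q < 1)
    (L T : H →L[ℝ] H)
    (hL : ∀ n : ℕ, L (e n) = q ^ n • e n)
    (v : H) (hv : v = (Real.sqrt 6 / Real.pi) • ∑' n : ℕ, ((n : ℝ) + 1)⁻¹ • e n)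
    (hT : ∀ x : H, T x = ⟪v, x⟫ • e 0) :
    ‖v‖ = 1 ∧ (∀ x : H, L (T x) = T x) ∧
      ¬ Filter.Tendsto (fun n : ℕ => (n : ℝ) * ⟪e 0, T (e n)⟫) Filter.atTop (nhds 0) :=
  rank_one_not_rapid_decay_general H e q L T hL v hv hT
end

section
/- Let 0 < q < 1 and define α_N(l)² := (1+q²)(1-t)·u with u := [l+N][l-N][2l]/(q[2l+1][l]²)·(1-t+q^{-2N}[2l]^{-2}[l]²(t-1+q^{2N})²)/(1-t) for half-integers N ≠ 0, real t ∈ [0,1) and [x] := (q^x-q^{-x})/(q-q^{-1}). Then there exists a constant C (depending on q, N, t but not on l) such that |u - 1| ≤ C·q^{2l} for all half-integers l ≥ 1. -/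
/-!
Put `s = q^{2l}` and `P = q^{2N}`. Since `[x] = (q^{2x} - 1)/((q - q⁻¹) q^x)`, the quantity `u` is a
rational function of `s` with `u(0) = 1`, whose poles `s = ±1`, `s = ±q⁻¹` lie off `[0, q²]`.
Being smooth on that compact interval it is Lipschitz there, so `|u(s) - 1| ≤ C s`, and
`l ≥ 1` gives `s ∈ (0, q²]`.
-/

/-- The q-analogue `[x] = (q^x - q^{-x})/(q - q⁻¹)`, with `q^x = exp (x log q)`. -/
noncomputable def qan (q x : ℝ) : ℝ := (q ^ x - q ^ (-x)) / (q - q⁻¹)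

open Set

theorem exists_abs_sub_le_mul_of_contDiffOn {f : ℝ → ℝ} {a : ℝ}
    (hf : ContDiffOn ℝ 1 f (Icc 0 a)) : ∃ C > 0, ∀ s ∈ Icc 0 a, |f s - f 0| ≤ C * s := by
  obtain ⟨K, hK⟩ := hf.exists_lipschitzOnWith one_ne_zero (convex_Icc 0 a) isCompact_Icc
  refine ⟨K + 1, by positivity, fun s hs => ?_⟩
  have h0 : (0 : ℝ) ∈ Icc 0 a := ⟨le_rfl, hs.1.trans hs.2⟩
  calc |f s - f 0| ≤ K * |s - 0| := by simpa [Real.dist_eq] using hK.dist_le_mul s hs 0 h0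
    _ = K * s := by rw [sub_zero, abs_of_nonneg hs.1]
    _ ≤ (K + 1) * s := by nlinarith [hs.1]

section QAnalogue

variable {q : ℝ}

theorem qan_eq_div (hq : 0 < q) (x : ℝ) : qan q x = ((q ^ x) ^ 2 - 1) / ((q - q⁻¹) * q ^ x) := by
  have : q ^ x ≠ 0 := (Real.rpow_pos_of_pos hq x).ne'
  rw [qan, Real.rpow_neg hq.le]
  field_simp

theorem qan_sq (hq : 0 < q) (x : ℝ) :
    qan q x ^ 2 = (q ^ (2 * x) - 1) ^ 2 / ((q - q⁻¹) ^ 2 * q ^ (2 * x)) := by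
  rw [qan_eq_div hq, two_mul, Real.rpow_add hq, div_pow, mul_pow]
  ring

theorem qan_add_mul_qan_sub (hq : 0 < q) (x y : ℝ) :
    qan q (x + y) * qan q (x - y) = qan q x ^ 2 - qan q y ^ 2 := by
  have hx : q ^ x ≠ 0 := (Real.rpow_pos_of_pos hq x).ne'
  have hy : q ^ y ≠ 0 := (Real.rpow_pos_of_pos hq y).ne'
  simp only [qan_eq_div hq, Real.rpow_add hq, Real.rpow_sub hq]
  field_simp
  ring

end QAnalogue

/-- `u` as a function of `s = q^{2l}`, with `P = q^{2N}` and `K = (t - 1 + P)² / (P (1 - t))`. -/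
noncomputable def uRational (q P K s : ℝ) : ℝ :=
  (s ^ 2 - (P + P⁻¹) * s + 1) * (s + 1) / ((q ^ 2 * s ^ 2 - 1) * (s - 1)) *
    (1 + K * s / (s + 1) ^ 2)

@[simp]
theorem uRational_zero (q P K : ℝ) : uRational q P K 0 = 1 := by
  norm_num [uRational]

theorem contDiffOn_uRational {q : ℝ} (hq0 : 0 < q) (hq1 : q < 1) (P K : ℝ) :
    ContDiffOn ℝ 1 (uRational q P K) (Icc 0 (q ^ 2)) := by
  have hq2 : q ^ 2 < 1 := by nlinarith
  refine (ContDiffOn.div (by fun_prop) (by fun_prop) fun s hs => ?_).mul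
    (ContDiffOn.add (by fun_prop) (ContDiffOn.div (by fun_prop) (by fun_prop) fun s hs => ?_))
  · have : q ^ 2 * s ^ 2 < 1 := by nlinarith [hs.1, hs.2]
    exact mul_ne_zero (by linarith) (by linarith [hs.2])
  · have := hs.1
    positivity

/-- The left-hand side is `u` with `[l]²`, `[N]²`, `[2l]`, `[2l+1]` written through
`s = q^{2l}`, `P = q^{2N}` and `c = q - q⁻¹`. -/
theorem eq_uRational {q t c s P : ℝ} (hq : q ≠ 0) (hc : c ≠ 0) (ht : t ≠ 1) (hs : s ≠ 0)
    (hs1 : s ^ 2 ≠ 1) (hqs : (s * q) ^ 2 ≠ 1) (hP : P ≠ 0) :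
    ((s - 1) ^ 2 / (c ^ 2 * s) - (P - 1) ^ 2 / (c ^ 2 * P)) * ((s ^ 2 - 1) / (c * s))
        / (q * (((s * q) ^ 2 - 1) / (c * (s * q))) * ((s - 1) ^ 2 / (c ^ 2 * s)))
        * ((1 - t + P⁻¹ * (((s ^ 2 - 1) / (c * s)) ^ 2)⁻¹ * ((s - 1) ^ 2 / (c ^ 2 * s))
            * (t - 1 + P) ^ 2) / (1 - t))
      = uRational q P ((t - 1 + P) ^ 2 / (P * (1 - t))) s := by
  have h1t : (1 : ℝ) - t ≠ 0 := sub_ne_zero.mpr ht.symm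
  have hsub : s - 1 ≠ 0 := fun h => hs1 (by rw [sub_eq_zero.mp h, one_pow])
  have hadd : s + 1 ≠ 0 := fun h => hs1 (by rw [eq_neg_of_add_eq_zero_left h]; norm_num)
  have hqs2 : (s * q) ^ 2 - 1 ≠ 0 := sub_ne_zero.mpr hqs
  have hq2s2 : q ^ 2 * s ^ 2 - 1 ≠ 0 := by rwa [← mul_pow, mul_comm]
  unfold uRational
  field_simp
  ring

theorem u_l_close_to_one_general (q t N : ℝ) (hq0 : 0 < q) (hq1 : q < 1) (ht1 : t < 1) :
    ∃ C : ℝ, 0 < C ∧ ∀ l : ℝ, (∃ m : ℤ, l = (m : ℝ) / 2) → 1 ≤ l →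
      |qan q (l + N) * qan q (l - N) * qan q (2 * l)
          / (q * qan q (2 * l + 1) * (qan q l) ^ 2)
          * ((1 - t + q ^ (-(2 * N)) * ((qan q (2 * l)) ^ 2)⁻¹ * (qan q l) ^ 2
              * (t - 1 + q ^ (2 * N)) ^ 2) / (1 - t))
        - 1| ≤ C * q ^ (2 * l) := by
  set P := q ^ (2 * N)
  obtain ⟨C, hC, hbound⟩ := exists_abs_sub_le_mul_of_contDiffOn
    (contDiffOn_uRational hq0 hq1 P ((t - 1 + P) ^ 2 / (P * (1 - t))))
  refine ⟨C, hC, fun l _ hl => ?_⟩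
  set s := q ^ (2 * l)
  have hs0 : 0 < s := Real.rpow_pos_of_pos hq0 _
  have hs_le : s ≤ q ^ 2 := by
    simpa using Real.rpow_le_rpow_of_exponent_ge hq0 hq1.le (by linarith : (2 : ℝ) ≤ 2 * l)
  have hs_lt : s < 1 := hs_le.trans_lt (by nlinarith)
  have hsq_lt : s * q < 1 := by nlinarith
  have hc : q - q⁻¹ ≠ 0 := by
    have : 1 < q⁻¹ := (one_lt_inv₀ hq0).mpr hq1
    linarith
  rw [qan_add_mul_qan_sub hq0, qan_sq hq0 l, qan_sq hq0 N, qan_eq_div hq0 (2 * l),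
    qan_eq_div hq0 (2 * l + 1), Real.rpow_add_one hq0.ne', Real.rpow_neg hq0.le,
    eq_uRational hq0.ne' hc ht1.ne hs0.ne' (by nlinarith) (by nlinarith [mul_pos hs0 hq0])
      (Real.rpow_pos_of_pos hq0 _).ne']
  simpa using hbound s ⟨hs0.le, hs_le⟩

theorem u_l_close_to_one (q t N : ℝ) (hq0 : 0 < q) (hq1 : q < 1)
    (hN : ∃ k : ℤ, N = (k : ℝ) / 2) (hN0 : N ≠ 0) (ht0 : 0 ≤ t) (ht1 : t < 1) :
    ∃ C : ℝ, 0 < C ∧ ∀ l : ℝ, (∃ m : ℤ, l = (m : ℝ) / 2) → 1 ≤ l →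
      |qan q (l + N) * qan q (l - N) * qan q (2 * l)
          / (q * qan q (2 * l + 1) * (qan q l) ^ 2)
          * ((1 - t + q ^ (-(2 * N)) * ((qan q (2 * l)) ^ 2)⁻¹ * (qan q l) ^ 2
              * (t - 1 + q ^ (2 * N)) ^ 2) / (1 - t))
        - 1| ≤ C * q ^ (2 * l) :=
  u_l_close_to_one_general q t N hq0 hq1 ht1
end
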